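/- If x is a dyadic rational number (as a game in canonical form), then the misère-play outcome of *:x is L if x > 0, P if x = 0, and R if x < 0. -/

import Mathlib

namespace SetTheory

universe u

/-- Pre-games, as in Mathlib's former `SetTheory.PGame` (removed from Mathlib). -/
inductive PGame : Type (u + 1)
  | mk : ∀ α β : Type u, (α → PGame) → (β → PGame) → PGame

namespace PGame

def LeftMoves : PGame.{u} → Type u
  | mk l _ _ _ => l

def RightMoves : PGame.{u} → Type u
  | mk _ r _ _ => r

def moveLeft : ∀ g : PGame.{u}, LeftMoves g → PGame.{u}
  | mk _ _ L _ => L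

def moveRight : ∀ g : PGame.{u}, RightMoves g → PGame.{u}
  | mk _ _ _ R => R

instance : Zero PGame.{u} := ⟨⟨PEmpty, PEmpty, PEmpty.elim, PEmpty.elim⟩⟩

def neg : PGame.{u} → PGame.{u}
  | mk l r L R => mk r l (fun i => neg (R i)) (fun i => neg (L i))

instance : Neg PGame.{u} := ⟨neg⟩

def addAux {xl xr : Type u} (IHl : xl → PGame.{u} → PGame.{u})
    (IHr : xr → PGame.{u} → PGame.{u}) : PGame.{u} → PGame.{u}
  | mk yl yr yL yR =>
    mk (xl ⊕ yl) (xr ⊕ yr)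
      (Sum.elim (fun i => IHl i (mk yl yr yL yR)) (fun j => addAux IHl IHr (yL j)))
      (Sum.elim (fun i => IHr i (mk yl yr yL yR)) (fun j => addAux IHl IHr (yR j)))

def add : PGame.{u} → PGame.{u} → PGame.{u}
  | mk _ _ xL xR => addAux (fun i => add (xL i)) (fun i => add (xR i))

instance : Add PGame.{u} := ⟨add⟩

def star : PGame.{u} := ⟨PUnit, PUnit, fun _ => 0, fun _ => 0⟩

inductive IsOption : PGame.{u} → PGame.{u} → Prop
  | moveLeft {x : PGame.{u}} (i : x.LeftMoves) : IsOption (x.moveLeft i) x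
  | moveRight {x : PGame.{u}} (i : x.RightMoves) : IsOption (x.moveRight i) x

def Subsequent : PGame.{u} → PGame.{u} → Prop := Relation.TransGen IsOption

end PGame

end SetTheory

open SetTheory

namespace Sprigs

/-- Partizan games (in the lowest universe). -/
abbrev PG : Type 1 := PGame.{0}

/-- Winning predicates moving first under misère play:
`(mw G).1` = Left wins moving first; `(mw G).2` = Right wins moving first. -/
def mw : PG → Prop × Prop
  | PGame.mk α β L R =>
    ((IsEmpty α ∨ ∃ i, ¬ (mw (L i)).2), (IsEmpty β ∨ ∃ j, ¬ (mw (R j)).1))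

/-- Winning predicates moving first under normal play. -/
def nw : PG → Prop × Prop
  | PGame.mk _ _ L R => ((∃ i, ¬ (nw (L i)).2), (∃ j, ¬ (nw (R j)).1))

/-- Outcome classes. -/
inductive Outcome : Type
  | L | R | N | P
deriving DecidableEq

/-- The outcome determined by "Left wins moving first" and "Right wins moving first". -/
noncomputable def outcomeOf (wl wr : Prop) : Outcome :=
  haveI := Classical.propDecidable wl
  haveI := Classical.propDecidable wr
  if wl then (if wr then .N else .L) else (if wr then .R else .P)

/-- Misère-play outcome. -/
noncomputable def mo (G : PG) : Outcome := outcomeOf (mw G).1 (mw G).2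

/-- Normal-play outcome. -/
noncomputable def no (G : PG) : Outcome := outcomeOf (nw G).1 (nw G).2

/-- Partial order on outcomes: R < P < L and R < N < L, with P, N incomparable. -/
def Outcome.le : Outcome → Outcome → Prop
  | .R, _ => True
  | _, .L => True
  | a, b => a = b

def Outcome.lt (a b : Outcome) : Prop := Outcome.le a b ∧ a ≠ b

/-- Dicot games: every subposition has moves for both players or neither. -/
def Dicot : PG → Prop
  | PGame.mk α β L R =>
    ((IsEmpty α ∧ IsEmpty β) ∨ (Nonempty α ∧ Nonempty β)) ∧
      (∀ i, Dicot (L i)) ∧ (∀ j, Dicot (R j))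

/-- Ordinal sum `G : H`. -/
def ordSum (G : PG) : PG → PGame
  | PGame.mk α β L R =>
    PGame.mk (G.LeftMoves ⊕ α) (G.RightMoves ⊕ β)
      (Sum.elim G.moveLeft (fun a => ordSum G (L a)))
      (Sum.elim G.moveRight (fun b => ordSum G (R b)))

/-- Canonical form of a natural number as a game. -/
def natGame : ℕ → PGame
  | 0 => PGame.mk PEmpty PEmpty PEmpty.elim PEmpty.elim
  | n + 1 => PGame.mk PUnit PEmpty (fun _ => natGame n) PEmpty.elim

/-- Canonical form of an integer as a game. -/
def intGame (m : ℤ) : PG := if 0 ≤ m then natGame m.toNat else -natGame (-m).toNat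

/-- Canonical form of the dyadic rational `m / 2 ^ n` as a game. -/
def dGame : ℕ → ℤ → PGame
  | 0, m => intGame m
  | n + 1, m =>
    if m % 2 = 0 then dGame n (m / 2)
    else PGame.mk PUnit PUnit (fun _ => dGame n ((m - 1) / 2)) (fun _ => dGame n ((m + 1) / 2))

/-- A rational number is dyadic if its denominator is a power of two. -/
def IsDyadic (q : ℚ) : Prop := ∃ n : ℕ, q.den = 2 ^ n

/-- The canonical-form game of a dyadic rational. -/
def qGame (q : ℚ) : PG := dGame (Nat.log 2 q.den) q.num

/-- The Sprig `* : x` for a dyadic rational `x`. -/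
def sprig (q : ℚ) : PG := ordSum PGame.star (qGame q)

/-- The Sprig `* : x̄` where `x̄` is the conjugate of the dyadic rational `x`. -/
def sprigNeg (q : ℚ) : PG := ordSum PGame.star (-qGame q)

/-- Disjunctive sum of a list of games. -/
def listSum (l : List PG) : PG := l.foldr (· + ·) 0

/-- The position `(X, Y) = Σ_{x ∈ X} *:x + Σ_{y ∈ Y} *:(-y)`. -/
def sprigsGame (X Y : List ℚ) : PG := listSum (X.map sprig ++ Y.map sprigNeg)

/-- The minimum of a nonempty multiset of rationals (0 for the empty multiset). -/
noncomputable def mmin (s : Multiset ℚ) : ℚ :=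
  if h : s = 0 then 0 else
    s.toFinset.min' (by rwa [Multiset.toFinset_nonempty])

/-- The edge `ε` computed from the reduced multisets `X' = X \ Y` and `Y' = Y \ X`. -/
noncomputable def edge (X Y : Multiset ℚ) : ℚ :=
  if X - Y = 0 ∨ Y - X = 0 then 0 else mmin (X - Y) - mmin (Y - X)

/-- The universe `S` of finite sums of Sprigs (and `*`). -/
inductive InS : PG → Prop
  | star : InS PGame.star
  | sprig {q : ℚ} (h : IsDyadic q) : InS (sprig q)
  | sprigNeg {q : ℚ} (h : IsDyadic q) : InS (sprigNeg q)
  | add {a b : PG} : InS a → InS b → InS (a + b)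

/-- A universe: a set of games closed under disjunctive sum and followers. -/
def IsUniverse (S : Set PG) : Prop :=
  (∀ a ∈ S, ∀ b ∈ S, a + b ∈ S) ∧ ∀ a ∈ S, ∀ b, PGame.Subsequent b a → b ∈ S

/- In `*:G` each player may also move to `0`, which under misère play hands the opponent a
position with no moves, i.e. a win; so these extra moves are useless and the misère game `*:G`
behaves exactly like the normal-play game `G`. The normal-play outcome of a number is read off
its sign. -/

theorem mw_zero : mw 0 = (True, True) := by
  show mw (PGame.mk PEmpty PEmpty _ _) = _
  rw [mw, Prod.mk.injEq]
  exact ⟨eq_true (Or.inl inferInstance), eq_true (Or.inl inferInstance)⟩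

theorem mw_ordSum_star (G : PG) : mw (ordSum PGame.star G) = nw G := by
  induction G with
  | mk α β L R ihL ihR =>
    rw [ordSum, mw, nw]
    simp only [Sum.exists, Sum.elim_inr, ihL, ihR]
    simp [PGame.star, PGame.LeftMoves, PGame.RightMoves, PGame.moveLeft, PGame.moveRight, mw_zero]

theorem neg_mk {α β : Type} (L : α → PG) (R : β → PG) :
    -PGame.mk α β L R = PGame.mk β α (fun j => -R j) (fun i => -L i) := rfl

theorem nw_natGame (k : ℕ) : nw (natGame k) = (0 < k, False) := by
  induction k with
  | zero => simp [natGame, nw]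
  | succ k ih => simp [natGame, nw, ih]

theorem nw_neg_natGame (k : ℕ) : nw (-natGame k) = (False, 0 < k) := by
  induction k with
  | zero => simp [natGame, neg_mk, nw]
  | succ k ih => simp [natGame, neg_mk, nw, ih]

theorem nw_intGame (m : ℤ) : nw (intGame m) = (0 < m, m < 0) := by
  unfold intGame
  split_ifs with hm
  · rw [nw_natGame]; simp only [Prod.mk.injEq, eq_iff_iff, false_iff, not_lt]; omega
  · rw [nw_neg_natGame]; simp only [Prod.mk.injEq, eq_iff_iff, false_iff, not_lt]; omega

theorem nw_dGame (n : ℕ) (m : ℤ) : nw (dGame n m) = (0 < m, m < 0) := by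
  induction n generalizing m with
  | zero => exact nw_intGame m
  | succ n ih =>
    unfold dGame
    split_ifs with hm
    · rw [ih]; simp only [Prod.mk.injEq, eq_iff_iff]; omega
    · simp only [nw, ih, exists_const, not_lt, Prod.mk.injEq, eq_iff_iff]
      omega

theorem nw_qGame (q : ℚ) : nw (qGame q) = (0 < q, q < 0) := by
  rw [qGame, nw_dGame, Rat.num_pos, Rat.num_neg]

theorem mo_sprig (q : ℚ) : mo (sprig q) = outcomeOf (0 < q) (q < 0) := by
  rw [mo, sprig, mw_ordSum_star, nw_qGame]

theorem stmt1_general (x : ℚ) :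
    (0 < x → mo (sprig x) = Outcome.L) ∧
    (x = 0 → mo (sprig x) = Outcome.P) ∧
    (x < 0 → mo (sprig x) = Outcome.R) := by
  refine ⟨fun h => ?_, fun h => ?_, fun h => ?_⟩
  · simp [mo_sprig, outcomeOf, h, h.not_gt]
  · simp [mo_sprig, outcomeOf, h]
  · simp [mo_sprig, outcomeOf, h, h.not_gt]

/-- For a dyadic rational `x`, `o⁻(*:x)` is `L` if `x > 0`, `P` if `x = 0`,
and `R` if `x < 0`. -/
theorem stmt1 (x : ℚ) (hx : IsDyadic x) :
    (0 < x → mo (sprig x) = Outcome.L) ∧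
    (x = 0 → mo (sprig x) = Outcome.P) ∧
    (x < 0 → mo (sprig x) = Outcome.R) :=
  stmt1_general x

end Sprigs
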